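/- arXiv:2603.26893 — 3 statements merged into one kernel-verified Lean document; each statement's English description precedes it below -/
import Mathlib

section
/- Given any request sequence E ∈ E_{n,m,q}, there exists a nested sequence Ẽ ∈ E^nest_{n,m,q} satisfying WF(E) ⪯ WF(Ẽ) and OPT(E) ⪰ OPT(Ẽ). -/
open Finset MeasureTheory

/-- A request sequence with `n` offline nodes and `m` online nodes: each online
node `t` has a nonempty neighborhood `N t ⊆ [n]` and a positive quantity `q t`. -/
structure ReqSeq (n m : ℕ) where
  N : Fin m → Finset (Fin n)
  q : Fin m → ℝ
  N_nonempty : ∀ t, (N t).Nonempty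
  q_pos : ∀ t, 0 < q t

/-- `Δ(N, q)`: feasible allocations for a single online node. -/
def allocSet (n : ℕ) (N : Finset (Fin n)) (qt : ℝ) : Set (Fin n → ℝ) :=
  {x | (∀ i, 0 ≤ x i) ∧ (∀ i, i ∉ N → x i = 0) ∧ ∑ i, x i = qt}

/-- A feasible allocation trajectory on a request sequence. -/
def Feasible {n m : ℕ} (E : ReqSeq n m) (x : Fin m → Fin n → ℝ) : Prop :=
  ∀ t, x t ∈ allocSet n (E.N t) (E.q t)

/-- `Δ(E)`: the Minkowski sum of the per-node allocation sets (feasible load vectors). -/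
def loads {n m : ℕ} (E : ReqSeq n m) : Set (Fin n → ℝ) :=
  {ℓ | ∃ x, Feasible E x ∧ ℓ = ∑ t, x t}

/-- Sum of the `k` largest entries of `x`. -/
noncomputable def topSum {n : ℕ} (x : Fin n → ℝ) (k : ℕ) : ℝ :=
  sSup ((fun s : Finset (Fin n) => ∑ i ∈ s, x i) '' {s | s.card = k})

/-- `Majorizes x y` means `x ⪰ y`: equal total sums and every `k`-largest-entries
sum of `x` dominates that of `y`. -/
def Majorizes {n : ℕ} (x y : Fin n → ℝ) : Prop :=
  (∑ i, x i = ∑ i, y i) ∧ ∀ k ≤ n, topSum y k ≤ topSum x k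

/-- `f` is Schur-concave on the nonnegative orthant: `x ⪯ y → f x ≥ f y`. -/
def SchurConcave {n : ℕ} (f : (Fin n → ℝ) → ℝ) : Prop :=
  ∀ x y : Fin n → ℝ, (∀ i, 0 ≤ x i) → (∀ i, 0 ≤ y i) → Majorizes y x → f y ≤ f x

/-- `g` is Schur-convex on the nonnegative orthant: `x ⪯ y → g x ≤ g y`. -/
def SchurConvex {n : ℕ} (g : (Fin n → ℝ) → ℝ) : Prop :=
  ∀ x y : Fin n → ℝ, (∀ i, 0 ≤ x i) → (∀ i, 0 ≤ y i) → Majorizes y x → g x ≤ g y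

/-- Cumulative load strictly before online node `t`. -/
def prevLoad {n m : ℕ} (x : Fin m → Fin n → ℝ) (t : Fin m) : Fin n → ℝ :=
  fun i => ∑ s ∈ Finset.univ.filter (fun s => s < t), x s i

/-- Minimum of `v` over the neighborhood of online node `t`. -/
noncomputable def reqMinOn {n m : ℕ} (E : ReqSeq n m) (t : Fin m) (v : Fin n → ℝ) : ℝ :=
  (E.N t).inf' (E.N_nonempty t) v

/-- `x` is the water-filling allocation trajectory on `E`: at each arrival `t`,
`x t` maximizes the minimum post-allocation load over `N t`. -/
def IsWFAlloc {n m : ℕ} (E : ReqSeq n m) (x : Fin m → Fin n → ℝ) : Prop :=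
  Feasible E x ∧
  ∀ t, ∀ y ∈ allocSet n (E.N t) (E.q t),
    reqMinOn E t (fun i => y i + prevLoad x t i) ≤ reqMinOn E t (fun i => x t i + prevLoad x t i)

-- The load vector produced by water-filling (via choice; the trajectory exists and is unique).
open Classical in
noncomputable def wfLoad {n m : ℕ} (E : ReqSeq n m) : Fin n → ℝ :=
  if h : ∃ x, IsWFAlloc E x then ∑ t, h.choose t else 0

/-- `ℓ` is the majorization-minimal element of `Δ(E)`. -/
def IsOpt {n m : ℕ} (E : ReqSeq n m) (ℓ : Fin n → ℝ) : Prop :=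
  ℓ ∈ loads E ∧ ∀ ℓ' ∈ loads E, Majorizes ℓ' ℓ

-- `OPT(E)`, the majorization-minimal feasible load vector (via choice).
open Classical in
noncomputable def optLoad {n m : ℕ} (E : ReqSeq n m) : Fin n → ℝ :=
  if h : ∃ ℓ, IsOpt E ℓ then h.choose else 0

/-- A request sequence is nested if `N 1 ⊇ N 2 ⊇ ⋯ ⊇ N m`. -/
def IsNested {n m : ℕ} (E : ReqSeq n m) : Prop :=
  ∀ s t : Fin m, s ≤ t → E.N t ⊆ E.N s

/-- `E_{n,m,q}`: request sequences with total quantity `q`. -/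
def seqs (n m : ℕ) (q : ℝ) : Set (ReqSeq n m) := {E | ∑ t, E.q t = q}

/-- The harmonic-series matrix applied to a vector: `(Hℓ)(i) = Σ_{j ≤ i} ℓ(j)/(n − j + 1)`
(in 1-indexed notation). -/
noncomputable def Hvec (n : ℕ) (ℓ : Fin n → ℝ) : Fin n → ℝ :=
  fun i => ∑ j ∈ Finset.univ.filter (fun j => j ≤ i), ℓ j / ((n - (j : ℕ) : ℕ) : ℝ)

/-- The water-filling height of online node `t`: the common post-allocation load of
the offline nodes in the support of `x t`. -/
noncomputable def height {n m : ℕ} (x : Fin m → Fin n → ℝ) (t : Fin m) : ℝ :=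
  sSup {c | ∃ i, 0 < x t i ∧ c = x t i + prevLoad x t i}

/-!
Let `v = WF(E)`. Each positive entry of `v` is the water level reached by the last online node
that touched it, so `v` takes at most `m` positive values; padding them we get levels
`0 = L 0 < ⋯ < L m = max v` containing every entry of `v`. In the nested sequence `Ẽ` whose node
`t` is adjacent to `{i | L t < v i}` and asks for the part of `v` between `L t` and `L (t + 1)`,
water-filling raises these nodes exactly to `L (t + 1)`, so `WF(Ẽ) = v`.

A node whose water level exceeds `θ` only sees offline nodes with `v > θ`, and the other nodes
raise each offline node to at most `θ`; hence every `w ∈ Δ(E)` puts at least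
`∑_{v i > θ} (v i - θ)` on `{v > θ}`. For `θ = L t` this is the total demand of the nodes
`s ≥ t` of `Ẽ`, and serving `Ẽ` from its last node backwards shows `Δ(E) ⊆ Δ(Ẽ)`, so
`OPT(Ẽ) ⪯ OPT(E)`.

`OPT` exists: majorization `x ⪰ y` follows from `∑ (y i - θ)⁺ ≤ ∑ (x i - θ)⁺` for all `θ`, and
the load of least Euclidean norm satisfies this against every feasible load, because no mass
can be moved from an offline node to a less loaded neighbour.
-/

section Majorization

variable {n : ℕ}

lemma sum_max_sub_eq_sum_filter (x : Fin n → ℝ) (θ : ℝ) :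
    ∑ i, max (x i - θ) 0 = ∑ i ∈ univ.filter (fun i => θ < x i), (x i - θ) := by
  rw [sum_filter]
  refine sum_congr rfl fun i _ => ?_
  split_ifs with h
  · exact max_eq_left (sub_nonneg.mpr h.le)
  · exact max_eq_right (sub_nonpos.mpr (not_lt.mp h))

lemma sum_le_topSum (x : Fin n → ℝ) {S : Finset (Fin n)} : ∑ i ∈ S, x i ≤ topSum x #S :=
  le_csSup (Set.toFinite _ |>.image _).bddAbove ⟨S, rfl, rfl⟩

lemma exists_sum_eq_topSum (x : Fin n → ℝ) {k : ℕ} (hk : k ≤ n) :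
    ∃ S : Finset (Fin n), #S = k ∧ ∑ i ∈ S, x i = topSum x k := by
  obtain ⟨S, -, hS⟩ := exists_subset_card_eq (s := (univ : Finset (Fin n))) (by simpa using hk)
  have hne : ((fun s : Finset (Fin n) => ∑ i ∈ s, x i) '' {s | #s = k}).Nonempty :=
    ⟨_, S, hS, rfl⟩
  obtain ⟨T, hT, hTsum⟩ := hne.csSup_mem ((Set.toFinite _).image _)
  exact ⟨T, hT, hTsum⟩

lemma topSum_le_add_sum_max_sub (x : Fin n → ℝ) {k : ℕ} (hk : k ≤ n) (θ : ℝ) :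
    topSum x k ≤ k * θ + ∑ i, max (x i - θ) 0 := by
  obtain ⟨S, rfl, hS⟩ := exists_sum_eq_topSum x hk
  calc topSum x #S = ∑ i ∈ S, x i := hS.symm
    _ ≤ ∑ i ∈ S, (θ + max (x i - θ) 0) := sum_le_sum fun i _ => by
        linarith [le_max_left (x i - θ) 0]
    _ ≤ #S * θ + ∑ i, max (x i - θ) 0 := by
        rw [sum_add_distrib, sum_const, nsmul_eq_mul]
        gcongr
        exact subset_univ S

/-- The bound `topSum_le_add_sum_max_sub` is attained at the `k`-th largest entry. -/
lemma exists_topSum_eq_add_sum_max_sub (x : Fin n → ℝ) {k : ℕ} (hk : k ≤ n) :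
    ∃ θ, topSum x k = k * θ + ∑ i, max (x i - θ) 0 := by
  obtain ⟨S, rfl, hS⟩ := exists_sum_eq_topSum x hk
  rcases S.eq_empty_or_nonempty with rfl | hne
  · refine ⟨∑ i, |x i|, ?_⟩
    rw [← hS, sum_eq_zero fun i _ => max_eq_right (sub_nonpos.mpr ((le_abs_self _).trans
      (single_le_sum (fun j _ => abs_nonneg (x j)) (mem_univ i))))]
    simp
  obtain ⟨i₀, hi₀, hmin⟩ := exists_mem_eq_inf' hne x
  have hout : ∀ j ∉ S, x j ≤ x i₀ := fun j hj => by
    have hswap := sum_le_topSum x (S := insert j (S.erase i₀))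
    rw [card_insert_of_notMem (fun h => hj (mem_of_mem_erase h)), card_erase_of_mem hi₀,
      Nat.sub_add_cancel (card_pos.mpr hne), ← hS, sum_insert (fun h => hj (mem_of_mem_erase h)),
      ← add_sum_erase S x hi₀] at hswap
    linarith
  refine ⟨x i₀, ?_⟩
  rw [← hS, sum_max_sub_eq_sum_filter]
  have hfilter : univ.filter (fun i => x i₀ < x i) ⊆ S := fun j hj => by
    by_contra hjS
    exact (hout j hjS).not_gt (mem_filter.mp hj).2
  rw [sum_subset hfilter fun j hjS hj => ?_]
  · rw [sum_sub_distrib, sum_const, nsmul_eq_mul]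
    ring
  · have hle : x i₀ ≤ x j := hmin ▸ inf'_le x hjS
    have hge : x j ≤ x i₀ := not_lt.mp fun h => hj (mem_filter.mpr ⟨mem_univ j, h⟩)
    linarith

lemma sum_max_sub_le_of_sum_filter_le {x y : Fin n → ℝ} {θ : ℝ}
    (h : ∑ i ∈ univ.filter (fun i => θ < y i), y i ≤ ∑ i ∈ univ.filter (fun i => θ < y i), x i) :
    ∑ i, max (y i - θ) 0 ≤ ∑ i, max (x i - θ) 0 := by
  rw [sum_max_sub_eq_sum_filter y]
  calc ∑ i ∈ univ.filter (fun i => θ < y i), (y i - θ)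
      ≤ ∑ i ∈ univ.filter (fun i => θ < y i), (x i - θ) := by
        simp only [sum_sub_distrib]
        linarith
    _ ≤ ∑ i ∈ univ.filter (fun i => θ < y i), max (x i - θ) 0 :=
        sum_le_sum fun i _ => le_max_left _ _
    _ ≤ ∑ i, max (x i - θ) 0 :=
        sum_le_sum_of_subset_of_nonneg (subset_univ _) fun i _ _ => le_max_right _ _

lemma majorizes_of_sum_max_sub_le {x y : Fin n → ℝ} (hsum : ∑ i, x i = ∑ i, y i)
    (h : ∀ θ, ∑ i, max (y i - θ) 0 ≤ ∑ i, max (x i - θ) 0) : Majorizes x y := by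
  refine ⟨hsum, fun k hk => ?_⟩
  obtain ⟨θ, hθ⟩ := exists_topSum_eq_add_sum_max_sub x hk
  linarith [topSum_le_add_sum_max_sub y hk θ, h θ]

lemma Majorizes.refl (x : Fin n → ℝ) : Majorizes x x :=
  ⟨rfl, fun _ _ => le_rfl⟩

end Majorization

lemma Set.Infinite.exists_finset_superset_card_eq {α : Type*} {s : Set α} (hs : s.Infinite)
    {Λ₀ : Finset α} (hΛ₀ : ↑Λ₀ ⊆ s) {k : ℕ} (hk : #Λ₀ ≤ k) :
    ∃ Λ : Finset α, Λ₀ ⊆ Λ ∧ ↑Λ ⊆ s ∧ #Λ = k := by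
  classical
  obtain ⟨Λ₁, hΛ₁, hcard⟩ := (hs.sdiff Λ₀.finite_toSet).exists_subset_card_eq (k - #Λ₀)
  refine ⟨Λ₀ ∪ Λ₁, Finset.subset_union_left, ?_, ?_⟩
  · rw [coe_union]
    exact Set.union_subset hΛ₀ (hΛ₁.trans Set.sdiff_subset)
  · rw [card_union_of_disjoint (Finset.disjoint_left.mpr fun x hx h₁ => (hΛ₁ h₁).2 hx), hcard]
    omega


section Loads

variable {n m : ℕ}

lemma sum_eq_of_mem_allocSet {N C : Finset (Fin n)} {q : ℝ} {y : Fin n → ℝ}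
    (hy : y ∈ allocSet n N q) (hNC : N ⊆ C) : ∑ i ∈ C, y i = q := by
  rw [← hy.2.2]
  exact sum_subset (subset_univ C) fun i _ hiC => hy.2.1 i fun hiN => hiC (hNC hiN)

lemma sum_le_of_mem_allocSet {N : Finset (Fin n)} {q : ℝ} {y : Fin n → ℝ}
    (hy : y ∈ allocSet n N q) (C : Finset (Fin n)) : ∑ i ∈ C, y i ≤ q := by
  rw [← hy.2.2]
  exact sum_le_sum_of_subset_of_nonneg (subset_univ C) fun i _ _ => hy.1 i

lemma exists_pos_of_mem_allocSet {N : Finset (Fin n)} {q : ℝ} {y : Fin n → ℝ}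
    (hy : y ∈ allocSet n N q) (hq : 0 < q) : ∃ i ∈ N, 0 < y i := by
  have : ∑ i ∈ N, (0 : ℝ) < ∑ i ∈ N, y i := by
    rw [sum_eq_of_mem_allocSet hy subset_rfl]; simpa using hq
  exact exists_lt_of_sum_lt this

lemma mem_of_mem_allocSet_of_pos {N : Finset (Fin n)} {q : ℝ} {y : Fin n → ℝ}
    (hy : y ∈ allocSet n N q) {i : Fin n} (hi : 0 < y i) : i ∈ N := by
  by_contra hiN
  exact hi.ne' (hy.2.1 i hiN)

lemma nonneg_of_mem_loads {E : ReqSeq n m} {w : Fin n → ℝ} (hw : w ∈ loads E) (i : Fin n) :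
    0 ≤ w i := by
  obtain ⟨x, hx, rfl⟩ := hw
  rw [Finset.sum_apply]
  exact sum_nonneg fun t _ => (hx t).1 i

lemma sum_eq_of_mem_loads {E : ReqSeq n m} {w : Fin n → ℝ} (hw : w ∈ loads E) :
    ∑ i, w i = ∑ t, E.q t := by
  obtain ⟨x, hx, rfl⟩ := hw
  simp only [Finset.sum_apply]
  rw [sum_comm]
  exact sum_congr rfl fun t _ => (hx t).2.2

lemma sum_q_le_of_mem_loads {E : ReqSeq n m} {w : Fin n → ℝ} (hw : w ∈ loads E)
    {T : Finset (Fin m)} {C : Finset (Fin n)} (hTC : ∀ t ∈ T, E.N t ⊆ C) :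
    ∑ t ∈ T, E.q t ≤ ∑ i ∈ C, w i := by
  obtain ⟨x, hx, rfl⟩ := hw
  simp only [Finset.sum_apply]
  rw [sum_comm]
  calc ∑ t ∈ T, E.q t = ∑ t ∈ T, ∑ i ∈ C, x t i :=
        sum_congr rfl fun t ht => (sum_eq_of_mem_allocSet (hx t) (hTC t ht)).symm
    _ ≤ ∑ t, ∑ i ∈ C, x t i :=
        sum_le_sum_of_subset_of_nonneg (subset_univ T) fun t _ _ =>
          sum_nonneg fun i _ => (hx t).1 i

lemma Feasible.sum_sum_le {E : ReqSeq n m} {x : Fin m → Fin n → ℝ} (hx : Feasible E x)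
    {w : Fin n → ℝ} (hw : w ∈ loads E) {T : Finset (Fin m)} {C : Finset (Fin n)}
    (hTC : ∀ t ∈ T, E.N t ⊆ C) : ∑ t ∈ T, ∑ i ∈ C, x t i ≤ ∑ i ∈ C, w i :=
  (sum_le_sum fun t _ => sum_le_of_mem_allocSet (hx t) C).trans (sum_q_le_of_mem_loads hw hTC)

lemma exists_pos_of_mem_loads {E : ReqSeq n m} {w : Fin n → ℝ} (hw : w ∈ loads E)
    (hm : 0 < m) : ∃ i, 0 < w i := by
  by_contra! h
  have := sum_pos (fun t _ => E.q_pos t) ⟨⟨0, hm⟩, mem_univ _⟩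
  linarith [sum_eq_of_mem_loads hw, sum_nonpos fun i (_ : i ∈ univ) => h i]

end Loads

section WaterFill

variable {n : ℕ} {N : Finset (Fin n)} {q c : ℝ} {p y z : Fin n → ℝ}

lemma exists_sum_max_sub_eq (hN : N.Nonempty) (hq : 0 ≤ q) (p : Fin n → ℝ) :
    ∃ c, ∑ i ∈ N, max (c - p i) 0 = q := by
  obtain ⟨i₀, hi₀, hmin⟩ := exists_mem_eq_inf' hN p
  set c₀ := N.inf' hN p
  have hcont : Continuous fun c : ℝ => ∑ i ∈ N, max (c - p i) 0 := by fun_prop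
  have hlow : ∑ i ∈ N, max (c₀ - p i) 0 = 0 :=
    sum_eq_zero fun i hi => max_eq_right (sub_nonpos.mpr (inf'_le p hi))
  have hhigh : q ≤ ∑ i ∈ N, max (c₀ + q - p i) 0 := by
    calc q = max (c₀ + q - p i₀) 0 := by rw [hmin]; simp [hq]
      _ ≤ ∑ i ∈ N, max (c₀ + q - p i) 0 :=
        single_le_sum (f := fun i => max (c₀ + q - p i) 0) (fun i _ => le_max_right _ _) hi₀
  obtain ⟨c, -, hc⟩ := intermediate_value_Icc (le_add_of_nonneg_right hq) hcont.continuousOn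
    ⟨hlow.symm ▸ hq, hhigh⟩
  exact ⟨c, hc⟩

lemma exists_fill (hN : N.Nonempty) (hq : 0 ≤ q) (p : Fin n → ℝ) :
    ∃ y ∈ allocSet n N q, ∃ c, ∀ i ∈ N, y i = max (c - p i) 0 := by
  classical
  obtain ⟨c, hc⟩ := exists_sum_max_sub_eq hN hq p
  refine ⟨fun i => if i ∈ N then max (c - p i) 0 else 0, ⟨fun i => ?_, fun i hi => if_neg hi, ?_⟩,
    c, fun i hi => if_pos hi⟩
  · dsimp only
    split_ifs
    exacts [le_max_right _ _, le_rfl]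
  · rw [← sum_filter, filter_mem_eq_inter, univ_inter, hc]

lemma inf'_add_eq_of_fill (hN : N.Nonempty) (hq : 0 < q) (hy : y ∈ allocSet n N q)
    (hfill : ∀ i ∈ N, y i = max (c - p i) 0) : N.inf' hN (fun i => y i + p i) = c := by
  obtain ⟨i₀, hi₀, hpos⟩ := exists_pos_of_mem_allocSet hy hq
  have hi₀c : y i₀ + p i₀ = c := by
    rw [hfill i₀ hi₀] at hpos ⊢
    rw [max_eq_left (le_of_lt (lt_max_iff.mp hpos |>.resolve_right (lt_irrefl 0)))]
    ring
  refine le_antisymm (hi₀c ▸ inf'_le _ hi₀) (le_inf' _ _ fun i hi => ?_)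
  rw [hfill i hi]
  linarith [le_max_left (c - p i) 0]

lemma eq_of_fill_of_le_inf' (hN : N.Nonempty) (hy : y ∈ allocSet n N q)
    (hfill : ∀ i ∈ N, y i = max (c - p i) 0) (hz : z ∈ allocSet n N q)
    (hle : c ≤ N.inf' hN (fun i => z i + p i)) : z = y := by
  have hyz : ∀ i ∈ N, y i ≤ z i := fun i hi => by
    rw [hfill i hi]
    exact max_le (by linarith [hle.trans (inf'_le _ hi)]) (hz.1 i)
  have hsum : ∑ i ∈ N, y i = ∑ i ∈ N, z i := by
    rw [sum_eq_of_mem_allocSet hy subset_rfl, sum_eq_of_mem_allocSet hz subset_rfl]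
  funext i
  by_cases hi : i ∈ N
  · exact ((sum_eq_sum_iff_of_le hyz).mp hsum i hi).symm
  · rw [hy.2.1 i hi, hz.2.1 i hi]

end WaterFill

section Trajectory

variable {n m : ℕ}

def IsWaterFilling (E : ReqSeq n m) (x : Fin m → Fin n → ℝ) (c : Fin m → ℝ) : Prop :=
  Feasible E x ∧ ∀ t, ∀ i ∈ E.N t, x t i = max (c t - prevLoad x t i) 0

noncomputable def wfTraj (E : ReqSeq n m) : Fin m → Fin n → ℝ
  | t => (exists_fill (E.N_nonempty t) (E.q_pos t).le
      (fun i => ∑ s ∈ (univ.filter (fun s => s < t)).attach, wfTraj E s.1 i)).choose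
  termination_by t => t.val
  decreasing_by
    all_goals exact (mem_filter.mp s.2).2

lemma wfTraj_spec (E : ReqSeq n m) (t : Fin m) :
    wfTraj E t ∈ allocSet n (E.N t) (E.q t) ∧
      ∃ c, ∀ i ∈ E.N t, wfTraj E t i = max (c - prevLoad (wfTraj E) t i) 0 := by
  have hprev : (fun i => ∑ s ∈ (univ.filter (fun s => s < t)).attach, wfTraj E s.1 i) =
      prevLoad (wfTraj E) t :=
    funext fun i => sum_attach _ fun s => wfTraj E s i
  rw [wfTraj]
  exact hprev ▸ (exists_fill (E.N_nonempty t) (E.q_pos t).le _).choose_spec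

lemma exists_isWaterFilling (E : ReqSeq n m) : ∃ x c, IsWaterFilling E x c := by
  choose c hc using fun t => (wfTraj_spec E t).2
  exact ⟨wfTraj E, c, fun t => (wfTraj_spec E t).1, hc⟩

lemma IsWaterFilling.isWFAlloc {E : ReqSeq n m} {x : Fin m → Fin n → ℝ} {c : Fin m → ℝ}
    (h : IsWaterFilling E x c) : IsWFAlloc E x := by
  refine ⟨h.1, fun t y hy => ?_⟩
  have hlevel := inf'_add_eq_of_fill (E.N_nonempty t) (E.q_pos t) (h.1 t) (h.2 t)
  unfold reqMinOn
  rw [hlevel]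
  by_contra! hlt
  have := eq_of_fill_of_le_inf' (E.N_nonempty t) (h.1 t) (h.2 t) hy hlt.le
  subst this
  exact hlt.ne' hlevel

lemma IsWFAlloc.eq_of_isWaterFilling {E : ReqSeq n m} {x y : Fin m → Fin n → ℝ}
    {c : Fin m → ℝ} (hx : IsWFAlloc E x) (hy : IsWaterFilling E y c) : x = y := by
  funext t
  induction t using WellFoundedLT.induction with
  | ind t ih =>
    have hprev : prevLoad x t = prevLoad y t := by
      funext i
      exact sum_congr rfl fun s hs => by rw [ih s (mem_filter.mp hs).2]
    have hmax := hx.2 t (y t) (hy.1 t)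
    unfold reqMinOn at hmax
    rw [hprev, inf'_add_eq_of_fill (E.N_nonempty t) (E.q_pos t) (hy.1 t) (hy.2 t)] at hmax
    exact eq_of_fill_of_le_inf' (E.N_nonempty t) (hy.1 t) (hy.2 t) (hx.1 t) hmax

lemma wfLoad_eq_of_isWaterFilling {E : ReqSeq n m} {x : Fin m → Fin n → ℝ} {c : Fin m → ℝ}
    (h : IsWaterFilling E x c) : wfLoad E = ∑ t, x t := by
  have hex : ∃ x, IsWFAlloc E x := ⟨x, h.isWFAlloc⟩
  rw [wfLoad, dif_pos hex, hex.choose_spec.eq_of_isWaterFilling h]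

end Trajectory

section Levels

variable {n m : ℕ} {x : Fin m → Fin n → ℝ}

lemma prevLoad_add_eq_sum_Iic (x : Fin m → Fin n → ℝ) (t : Fin m) (i : Fin n) :
    prevLoad x t i + x t i = ∑ s ∈ Iic t, x s i := by
  rw [prevLoad, filter_gt_eq_Iio, ← Iio_insert, sum_insert (by simp), add_comm]

lemma sum_le_sum_Iic {i : Fin n} (hx : ∀ s, 0 ≤ x s i) {F : Finset (Fin m)} {t : Fin m}
    (hF : ∀ s ∈ F, 0 < x s i → s ≤ t) : ∑ s ∈ F, x s i ≤ ∑ s ∈ Iic t, x s i := by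
  rw [← sum_filter_of_ne (p := fun s => 0 < x s i) fun s _ hs => (hx s).lt_of_ne' hs]
  exact sum_le_sum_of_subset_of_nonneg (fun s hs => mem_Iic.mpr (hF s (mem_filter.mp hs).1
    (mem_filter.mp hs).2)) fun s _ _ => hx s

variable {E : ReqSeq n m} {c : Fin m → ℝ}

lemma IsWaterFilling.sum_Iic_eq_of_pos (h : IsWaterFilling E x c) {t : Fin m} {i : Fin n}
    (hpos : 0 < x t i) : ∑ s ∈ Iic t, x s i = c t := by
  rw [← prevLoad_add_eq_sum_Iic, h.2 t i (mem_of_mem_allocSet_of_pos (h.1 t) hpos)]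
  rw [h.2 t i (mem_of_mem_allocSet_of_pos (h.1 t) hpos)] at hpos
  rw [max_eq_left (lt_max_iff.mp hpos |>.resolve_right (lt_irrefl 0)).le]
  ring

lemma IsWaterFilling.le_sum_Iic (h : IsWaterFilling E x c) {t : Fin m} {i : Fin n}
    (hi : i ∈ E.N t) : c t ≤ ∑ s ∈ Iic t, x s i := by
  rw [← prevLoad_add_eq_sum_Iic, h.2 t i hi]
  linarith [le_max_left (c t - prevLoad x t i) 0]

lemma IsWaterFilling.mem_range_level (h : IsWaterFilling E x c) {i : Fin n}
    (hi : 0 < (∑ t, x t) i) : (∑ s, x s) i ∈ Set.range c := by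
  rw [Finset.sum_apply] at hi ⊢
  obtain ⟨t₀, -, ht₀⟩ := exists_lt_of_sum_lt (s := univ) (f := fun _ => (0 : ℝ)) (by simpa)
  set F := univ.filter fun t => 0 < x t i
  have hF : F.Nonempty := ⟨t₀, by simpa [F] using ht₀⟩
  have hlast := mem_filter.mp (F.max'_mem hF)
  refine ⟨F.max' hF, le_antisymm ?_ ?_⟩
  · rw [← h.sum_Iic_eq_of_pos hlast.2]
    exact sum_le_sum_of_subset_of_nonneg (subset_univ _) fun s _ _ => (h.1 s).1 i
  · rw [← h.sum_Iic_eq_of_pos hlast.2]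
    exact sum_le_sum_Iic (fun s => (h.1 s).1 i) fun s _ hs =>
      F.le_max' s (mem_filter.mpr ⟨mem_univ s, hs⟩)

lemma IsWaterFilling.sum_filter_sub_le (h : IsWaterFilling E x c) {w : Fin n → ℝ}
    (hw : w ∈ loads E) {θ : ℝ} (hθ : 0 ≤ θ) :
    ∑ i ∈ univ.filter (fun i => θ < (∑ t, x t) i), ((∑ t, x t) i - θ) ≤
      ∑ i ∈ univ.filter (fun i => θ < (∑ t, x t) i), w i := by
  simp only [Finset.sum_apply]
  set C := univ.filter (fun i => θ < ∑ t, x t i)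
  set T := univ.filter (fun t => θ < c t)
  have hTC : ∀ t ∈ T, E.N t ⊆ C := fun t ht j hj => by
    refine mem_filter.mpr ⟨mem_univ j, (mem_filter.mp ht).2.trans_le ((h.le_sum_Iic hj).trans ?_)⟩
    exact sum_le_sum_of_subset_of_nonneg (subset_univ _) fun s _ _ => (h.1 s).1 j
  have hlow : ∀ i, ∑ t ∈ univ \ T, x t i ≤ θ := fun i => by
    set F := (univ \ T).filter fun t => 0 < x t i
    rcases F.eq_empty_or_nonempty with hF | hF
    · rw [sum_eq_zero fun t ht => ?_]
      · exact hθ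
      · by_contra hne
        have : t ∈ F := mem_filter.mpr ⟨ht, ((h.1 t).1 i).lt_of_ne' hne⟩
        simp [hF] at this
    · have hlast := mem_filter.mp (F.max'_mem hF)
      calc ∑ t ∈ univ \ T, x t i ≤ ∑ s ∈ Iic (F.max' hF), x s i :=
            sum_le_sum_Iic (fun s => (h.1 s).1 i) fun s hs hpos =>
              F.le_max' s (mem_filter.mpr ⟨hs, hpos⟩)
        _ = c (F.max' hF) := h.sum_Iic_eq_of_pos hlast.2
        _ ≤ θ := by simpa [T] using (mem_sdiff.mp hlast.1).2
  have hsplit : ∑ i ∈ C, ∑ t, x t i =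
      ∑ t ∈ T, ∑ i ∈ C, x t i + ∑ i ∈ C, ∑ t ∈ univ \ T, x t i := by
    rw [sum_comm, ← sum_add_sum_compl T, compl_eq_univ_sdiff, sum_comm (s := univ \ T)]
  have hT := h.1.sum_sum_le hw hTC
  have hrest : ∑ i ∈ C, ∑ t ∈ univ \ T, x t i ≤ ∑ _i ∈ C, θ := sum_le_sum fun i _ => hlow i
  rw [sum_sub_distrib]
  linarith

end Levels

section Opt

variable {n m : ℕ}

lemma isCompact_allocSet (N : Finset (Fin n)) (q : ℝ) : IsCompact (allocSet n N q) := by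
  have hclosed : IsClosed (allocSet n N q) := by
    simp only [allocSet, Set.ofPred_and, Set.ofPred_forall]
    refine .inter (isClosed_iInter fun i => isClosed_le continuous_const (continuous_apply i))
      (.inter (isClosed_iInter fun i => isClosed_iInter fun _ =>
        isClosed_eq (continuous_apply i) continuous_const)
        (isClosed_eq (continuous_finsetSum _ fun i _ => continuous_apply i) continuous_const))
  refine (isCompact_Icc (a := 0) (b := fun _ => q)).of_isClosed_subset hclosed fun y hy =>
    ⟨hy.1, fun i => ?_⟩
  rw [← hy.2.2]
  exact single_le_sum (fun j _ => hy.1 j) (mem_univ i)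

lemma isCompact_loads (E : ReqSeq n m) : IsCompact (loads E) := by
  have : loads E = (fun x => ∑ t, x t) '' Set.univ.pi fun t => allocSet n (E.N t) (E.q t) := by
    ext w
    simp [loads, Feasible, eq_comm]
  rw [this]
  exact (isCompact_univ_pi fun t => isCompact_allocSet _ _).image (by fun_prop)

lemma loads_nonempty (E : ReqSeq n m) : (loads E).Nonempty := by
  choose y hy using fun t => exists_fill (E.N_nonempty t) (E.q_pos t).le 0
  exact ⟨_, y, fun t => (hy t).1, rfl⟩

lemma sum_update_eq (x : Fin m → Fin n → ℝ) (t : Fin m) (y : Fin n → ℝ) :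
    ∑ s, Function.update x t y s = ∑ s, x s + (y - x t) := by
  rw [sum_update_of_mem (mem_univ t), sdiff_singleton_eq_erase, ← add_sum_erase univ x (mem_univ t)]
  abel

/-- Moving `δ` from `i` to `j` changes the squared norm by `2 δ (ℓ j - ℓ i) + 2 δ ^ 2`. -/
lemma le_of_isMinOn_sum_sq {E : ReqSeq n m} {x : Fin m → Fin n → ℝ} (hx : Feasible E x)
    (hmin : IsMinOn (fun ℓ : Fin n → ℝ => ∑ i, ℓ i ^ 2) (loads E) (∑ t, x t))
    {t : Fin m} {i j : Fin n} (hpos : 0 < x t i) (hj : j ∈ E.N t) :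
    (∑ s, x s) i ≤ (∑ s, x s) j := by
  set ℓ := ∑ s, x s
  by_contra! hlt
  have hij : j ≠ i := by rintro rfl; exact lt_irrefl _ hlt
  have hi : i ∈ E.N t := mem_of_mem_allocSet_of_pos (hx t) hpos
  set δ := min (x t i) ((ℓ i - ℓ j) / 2)
  have hδ : 0 < δ := lt_min hpos (by linarith)
  set d : Fin n → ℝ := Pi.single j δ - Pi.single i δ
  have hd : ∀ a, d a = (if a = j then δ else 0) - (if a = i then δ else 0) := fun a => by
    simp [d, Pi.single_apply]
  have hmove : x t + d ∈ allocSet n (E.N t) (E.q t) := by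
    refine ⟨fun a => ?_, fun a ha => ?_, ?_⟩
    · have := (hx t).1 a
      have : δ ≤ x t i := min_le_left _ _
      rw [Pi.add_apply, hd]
      split_ifs with h1 h2 <;> subst_vars <;> linarith
    · rw [Pi.add_apply, hd, if_neg (ne_of_mem_of_not_mem hj ha).symm,
        if_neg (ne_of_mem_of_not_mem hi ha).symm, (hx t).2.1 a ha]
      ring
    · simp only [Pi.add_apply, hd, sum_add_distrib, sum_sub_distrib, sum_ite_eq', mem_univ,
        if_true, (hx t).2.2]
      ring
  have hload : ℓ + d ∈ loads E := by
    refine ⟨Function.update x t (x t + d), fun s => ?_, by rw [sum_update_eq, add_sub_cancel_left]⟩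
    rcases eq_or_ne s t with rfl | hs
    · simpa using hmove
    · simpa [hs] using hx s
  have hsq : ∑ a, (ℓ + d) a ^ 2 = ∑ a, ℓ a ^ 2 + 2 * δ * (ℓ j - ℓ i) + 2 * δ ^ 2 := by
    have hpt : ∀ a, (ℓ + d) a ^ 2 = ℓ a ^ 2 + (if a = j then 2 * δ * ℓ j + δ ^ 2 else 0) +
        (if a = i then -(2 * δ * ℓ i) + δ ^ 2 else 0) := fun a => by
      rw [Pi.add_apply, hd]
      split_ifs with h1 h2 <;> subst_vars <;> first | exact absurd rfl hij | ring
    simp only [hpt, sum_add_distrib, sum_ite_eq', mem_univ, if_true]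
    ring
  have hle := isMinOn_iff.mp hmin _ hload
  simp only [hsq] at hle
  nlinarith [min_le_right (x t i) ((ℓ i - ℓ j) / 2)]

lemma sum_filter_le_of_isMinOn_sum_sq {E : ReqSeq n m} {x : Fin m → Fin n → ℝ}
    (hx : Feasible E x)
    (hmin : IsMinOn (fun ℓ : Fin n → ℝ => ∑ i, ℓ i ^ 2) (loads E) (∑ t, x t))
    {w : Fin n → ℝ} (hw : w ∈ loads E) (θ : ℝ) :
    ∑ i ∈ univ.filter (fun i => θ < (∑ t, x t) i), (∑ t, x t) i ≤
      ∑ i ∈ univ.filter (fun i => θ < (∑ t, x t) i), w i := by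
  set C := univ.filter (fun i => θ < (∑ t, x t) i)
  have hout : ∀ t ∉ univ.filter (fun t => E.N t ⊆ C), ∑ i ∈ C, x t i = 0 := fun t ht =>
    sum_eq_zero fun i hi => by
      by_contra hne
      refine ht (mem_filter.mpr ⟨mem_univ t, fun j hj => mem_filter.mpr ⟨mem_univ j, ?_⟩⟩)
      exact (mem_filter.mp hi).2.trans_le
        (le_of_isMinOn_sum_sq hx hmin (((hx t).1 i).lt_of_ne' hne) hj)
  calc ∑ i ∈ C, (∑ t, x t) i = ∑ t, ∑ i ∈ C, x t i := by
        simp only [Finset.sum_apply]; exact sum_comm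
    _ = ∑ t ∈ univ.filter (fun t => E.N t ⊆ C), ∑ i ∈ C, x t i :=
        (sum_subset (subset_univ _) fun t _ ht => hout t ht).symm
    _ ≤ ∑ i ∈ C, w i := hx.sum_sum_le hw fun t ht => (mem_filter.mp ht).2

lemma exists_isOpt (E : ReqSeq n m) : ∃ ℓ, IsOpt E ℓ := by
  obtain ⟨ℓ, hℓ, hmin⟩ := (isCompact_loads E).exists_isMinOn (loads_nonempty E)
    (f := fun ℓ : Fin n → ℝ => ∑ i, ℓ i ^ 2) (by fun_prop)
  obtain ⟨x, hx, rfl⟩ := hℓ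
  refine ⟨∑ t, x t, ⟨x, hx, rfl⟩, fun w hw => majorizes_of_sum_max_sub_le
    ((sum_eq_of_mem_loads hw).trans (sum_eq_of_mem_loads ⟨x, hx, rfl⟩).symm) fun θ =>
      sum_max_sub_le_of_sum_filter_le (sum_filter_le_of_isMinOn_sum_sq hx hmin hw θ)⟩

lemma optLoad_isOpt (E : ReqSeq n m) : IsOpt E (optLoad E) := by
  rw [optLoad, dif_pos (exists_isOpt E)]
  exact (exists_isOpt E).choose_spec

end Opt

section Tail

variable {n m : ℕ}

lemma exists_mem_allocSet_le {N : Finset (Fin n)} {q : ℝ} (hq : 0 ≤ q) {ρ : Fin n → ℝ}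
    (hρ : ∀ i, 0 ≤ ρ i) (hqρ : q ≤ ∑ i ∈ N, ρ i) :
    ∃ z ∈ allocSet n N q, ∀ i, z i ≤ ρ i := by
  classical
  set S := ∑ i ∈ N, ρ i
  have hS : 0 ≤ S := hq.trans hqρ
  refine ⟨fun i => if i ∈ N then q / S * ρ i else 0, ⟨fun i => ?_, fun i hi => if_neg hi, ?_⟩,
    fun i => ?_⟩
  · dsimp only
    split_ifs
    exacts [mul_nonneg (div_nonneg hq hS) (hρ i), le_rfl]
  · rw [← sum_filter, filter_mem_eq_inter, univ_inter, ← mul_sum]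
    rcases hS.eq_or_lt with hS0 | hSpos
    · rw [← hS0, div_zero, zero_mul]
      linarith
    · exact div_mul_cancel₀ q hSpos.ne'
  · dsimp only
    split_ifs
    · rcases hS.eq_or_lt with hS0 | hSpos
      · rw [← hS0, div_zero, zero_mul]; exact hρ i
      · exact mul_le_of_le_one_left (hρ i) ((div_le_one hSpos).mpr hqρ)
    · exact hρ i

/-- Serve the latest node of `T` first; what is left of `ρ` still meets the suffix bounds of the
other nodes. -/
lemma exists_feasible_on_of_sum_suffix_le (E : ReqSeq n m) (T : Finset (Fin m)) :
    ∀ ρ : Fin n → ℝ, (∀ i, 0 ≤ ρ i) →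
      (∀ t ∈ T, ∑ s ∈ T with t ≤ s, E.q s ≤ ∑ i ∈ E.N t, ρ i) →
      ∃ x : Fin m → Fin n → ℝ, (∀ t ∈ T, x t ∈ allocSet n (E.N t) (E.q t)) ∧
        ∀ i, ∑ t ∈ T, x t i ≤ ρ i := by
  induction T using Finset.induction_on_max with
  | empty => exact fun ρ hρ _ => ⟨0, by simp, fun i => by simpa using hρ i⟩
  | insert a T hlt ih =>
    intro ρ hρ hsuf
    have haT : a ∉ T := fun h => lt_irrefl a (hlt a h)
    have hsplit : ∀ t ∈ T, ∑ s ∈ insert a T with t ≤ s, E.q s =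
        E.q a + ∑ s ∈ T with t ≤ s, E.q s := fun t ht => by
      rw [filter_insert, if_pos (hlt t ht).le, sum_insert (by simp [haT])]
    have hlast : ∑ s ∈ insert a T with a ≤ s, E.q s = E.q a := by
      rw [filter_insert, if_pos le_rfl, sum_insert (by simp [haT]),
        filter_false_of_mem fun s hs => not_le.mpr (hlt s hs), sum_empty, add_zero]
    obtain ⟨z, hz, hzρ⟩ := exists_mem_allocSet_le (E.q_pos a).le hρ
      (hlast ▸ hsuf a (mem_insert_self a T))
    obtain ⟨x, hx, hxρ⟩ := ih (ρ - z) (fun i => sub_nonneg.mpr (hzρ i)) fun t ht => by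
      have h := hsuf t (mem_insert_of_mem ht)
      rw [hsplit t ht] at h
      have hzN := sum_le_of_mem_allocSet hz (E.N t)
      simp only [Pi.sub_apply, sum_sub_distrib]
      linarith
    refine ⟨Function.update x a z, fun t ht => ?_, fun i => ?_⟩
    · rcases mem_insert.mp ht with rfl | ht
      · simpa using hz
      · simpa [ne_of_mem_of_not_mem ht haT] using hx t ht
    · rw [sum_insert haT, Function.update_self,
        sum_congr rfl fun t ht => by rw [Function.update_of_ne (ne_of_mem_of_not_mem ht haT)]]
      linarith [hxρ i, show (ρ - z) i = ρ i - z i from rfl]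

lemma mem_loads_of_sum_suffix_le (E : ReqSeq n m) {ω : Fin n → ℝ} (hω : ∀ i, 0 ≤ ω i)
    (hsum : ∑ i, ω i = ∑ t, E.q t)
    (hsuf : ∀ t, ∑ s with t ≤ s, E.q s ≤ ∑ i ∈ E.N t, ω i) : ω ∈ loads E := by
  obtain ⟨x, hx, hxω⟩ := exists_feasible_on_of_sum_suffix_le E univ ω hω fun t _ => hsuf t
  have hfeas : Feasible E x := fun t => hx t (mem_univ t)
  have htot : ∑ i, ∑ t, x t i = ∑ i, ω i := by
    rw [hsum, ← sum_eq_of_mem_loads ⟨x, hfeas, rfl⟩]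
    simp only [Finset.sum_apply]
  refine ⟨x, hfeas, funext fun i => ?_⟩
  rw [Finset.sum_apply]
  exact ((sum_eq_sum_iff_of_le fun i _ => hxω i).mp htot i (mem_univ i)).symm

end Tail

structure LevelGrid {n : ℕ} (m : ℕ) (v : Fin n → ℝ) where
  /-- only `L 0, …, L m` are constrained -/
  L : ℕ → ℝ
  strictMonoOn : StrictMonoOn L (Set.Iic m)
  map_zero : L 0 = 0
  exists_eq_L : ∀ i, ∃ j ≤ m, v i = L j
  exists_eq_L_top : ∃ i, v i = L m

namespace LevelGrid

variable {n m : ℕ} {v : Fin n → ℝ} (G : LevelGrid m v)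

lemma mono {j k : ℕ} (hjk : j ≤ k) (hk : k ≤ m) : G.L j ≤ G.L k :=
  G.strictMonoOn.monotoneOn (Set.mem_Iic.mpr (hjk.trans hk)) (Set.mem_Iic.mpr hk) hjk

lemma lt_succ {t : ℕ} (ht : t < m) : G.L t < G.L (t + 1) :=
  G.strictMonoOn (Set.mem_Iic.mpr ht.le) (Set.mem_Iic.mpr ht) (Nat.lt_succ_self t)

lemma nonneg_L {j : ℕ} (hj : j ≤ m) : 0 ≤ G.L j :=
  G.map_zero ▸ G.mono (Nat.zero_le j) hj

lemma nonneg (G : LevelGrid m v) (i : Fin n) : 0 ≤ v i := by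
  obtain ⟨j, hj, hvj⟩ := G.exists_eq_L i
  exact hvj ▸ G.nonneg_L hj

lemma le_top (G : LevelGrid m v) (i : Fin n) : v i ≤ G.L m := by
  obtain ⟨j, hj, hvj⟩ := G.exists_eq_L i
  exact hvj ▸ G.mono hj le_rfl

lemma succ_le_of_lt {t : ℕ} (ht : t < m) {i : Fin n} (hi : G.L t < v i) : G.L (t + 1) ≤ v i := by
  obtain ⟨j, hj, hvj⟩ := G.exists_eq_L i
  rw [hvj] at hi ⊢
  exact G.mono (not_le.mp fun hjt => hi.not_ge (G.mono hjt ht.le)) hj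

noncomputable def alloc (t : Fin m) (i : Fin n) : ℝ :=
  min (v i) (G.L (t + 1)) - min (v i) (G.L t)

lemma alloc_of_lt {t : Fin m} {i : Fin n} (hi : G.L t < v i) :
    G.alloc t i = G.L (t + 1) - G.L t := by
  rw [alloc, min_eq_right (G.succ_le_of_lt t.isLt hi), min_eq_right hi.le]

lemma alloc_of_le {t : Fin m} {i : Fin n} (hi : v i ≤ G.L t) : G.alloc t i = 0 := by
  rw [alloc, min_eq_left (hi.trans (G.lt_succ t.isLt).le), min_eq_left hi, sub_self]

lemma alloc_nonneg (t : Fin m) (i : Fin n) : 0 ≤ G.alloc t i :=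
  sub_nonneg.mpr (min_le_min_left _ (G.lt_succ t.isLt).le)

lemma exists_lt (t : Fin m) : ∃ i, G.L t < v i := by
  obtain ⟨i, hi⟩ := G.exists_eq_L_top
  exact ⟨i, hi ▸ G.strictMonoOn (Set.mem_Iic.mpr t.isLt.le) (Set.mem_Iic.mpr le_rfl) t.isLt⟩

noncomputable def seq : ReqSeq n m where
  N t := univ.filter fun i => G.L t < v i
  q t := ∑ i, G.alloc t i
  N_nonempty t := by
    obtain ⟨i, hi⟩ := G.exists_lt t
    exact ⟨i, mem_filter.mpr ⟨mem_univ i, hi⟩⟩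
  q_pos t := by
    obtain ⟨i, hi⟩ := G.exists_lt t
    refine sum_pos' (fun i _ => G.alloc_nonneg t i) ⟨i, mem_univ i, ?_⟩
    rw [G.alloc_of_lt hi]
    exact sub_pos.mpr (G.lt_succ t.isLt)

lemma alloc_mem (t : Fin m) : G.alloc t ∈ allocSet n (G.seq.N t) (G.seq.q t) :=
  ⟨G.alloc_nonneg t, fun i hi => G.alloc_of_le (not_lt.mp fun h => hi (by simpa [seq] using h)),
    rfl⟩

lemma sum_Iio_alloc (t : Fin m) (i : Fin n) : ∑ s ∈ Iio t, G.alloc s i = min (v i) (G.L t) := by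
  have := sum_map (Iio t) Fin.valEmbedding fun j => min (v i) (G.L (j + 1)) - min (v i) (G.L j)
  rw [Fin.map_valEmbedding_Iio, Nat.Iio_eq_range, sum_range_sub fun j => min (v i) (G.L j),
    G.map_zero, min_eq_right (G.nonneg i), sub_zero] at this
  exact this.symm

lemma sum_alloc (i : Fin n) : ∑ t, G.alloc t i = v i := by
  have := Fin.sum_univ_eq_sum_range (fun j => min (v i) (G.L (j + 1)) - min (v i) (G.L j)) m
  rw [sum_range_sub fun j => min (v i) (G.L j), G.map_zero, min_eq_right (G.nonneg i),
    min_eq_left (G.le_top i), sub_zero] at this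
  exact this

lemma isWaterFilling : IsWaterFilling G.seq G.alloc fun t => G.L (t + 1) := by
  refine ⟨G.alloc_mem, fun t i hi => ?_⟩
  have hi : G.L t < v i := (mem_filter.mp hi).2
  rw [prevLoad, filter_gt_eq_Iio, G.sum_Iio_alloc, min_eq_right hi.le, G.alloc_of_lt hi,
    max_eq_left (sub_nonneg.mpr (G.lt_succ t.isLt).le)]

lemma wfLoad_seq : wfLoad G.seq = v := by
  rw [wfLoad_eq_of_isWaterFilling G.isWaterFilling]
  funext i
  rw [Finset.sum_apply, G.sum_alloc]

lemma isNested_seq : IsNested G.seq := fun _ t hst i hi =>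
  mem_filter.mpr ⟨mem_univ i, (G.mono hst t.isLt.le).trans_lt (mem_filter.mp hi).2⟩

lemma sum_seq_q : ∑ t, G.seq.q t = ∑ i, v i := by
  simp only [seq]
  rw [sum_comm]
  exact sum_congr rfl fun i _ => G.sum_alloc i

lemma sum_suffix_seq_q (t : Fin m) :
    ∑ s with t ≤ s, G.seq.q s = ∑ i, max (v i - G.L t) 0 := by
  simp only [seq]
  rw [sum_comm]
  refine sum_congr rfl fun i _ => ?_
  have hsplit := sum_filter_add_sum_filter_not univ (fun s => t ≤ s) fun s => G.alloc s i
  simp only [not_le, filter_gt_eq_Iio, G.sum_Iio_alloc, G.sum_alloc] at hsplit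
  rw [eq_sub_of_add_eq hsplit]
  rcases le_total (v i) (G.L t) with h | h
  · rw [min_eq_left h, sub_self, max_eq_right (sub_nonpos.mpr h)]
  · rw [min_eq_right h, max_eq_left (sub_nonneg.mpr h)]

lemma mem_loads_seq {ω : Fin n → ℝ} (hω : ∀ i, 0 ≤ ω i) (hsum : ∑ i, ω i = ∑ i, v i)
    (hsuf : ∀ t : Fin m, ∑ i ∈ univ.filter (fun i => G.L t < v i), (v i - G.L t) ≤
      ∑ i ∈ univ.filter (fun i => G.L t < v i), ω i) : ω ∈ loads G.seq :=
  mem_loads_of_sum_suffix_le G.seq hω (hsum.trans G.sum_seq_q.symm) fun t => by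
    rw [G.sum_suffix_seq_q, sum_max_sub_eq_sum_filter]
    exact hsuf t

noncomputable def ofFinset {Λ : Finset ℝ} (hcard : #Λ = m + 1) (h0 : 0 ∈ Λ)
    (hnonneg : ∀ x ∈ Λ, 0 ≤ x) (hv : ∀ i, v i ∈ Λ) (htop : ∃ i, ∀ x ∈ Λ, x ≤ v i) :
    LevelGrid m v where
  L j := Λ.orderEmbOfFin hcard ⟨min j m, by omega⟩
  strictMonoOn j hj k hk hjk := by
    simp only [Set.mem_Iic] at hj hk
    exact (Λ.orderEmbOfFin hcard).strictMono (Fin.mk_lt_mk.mpr (by omega))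
  map_zero := by
    obtain ⟨j, hj⟩ : 0 ∈ Set.range (Λ.orderEmbOfFin hcard) := by rwa [range_orderEmbOfFin]
    refine le_antisymm ?_ (hnonneg _ (orderEmbOfFin_mem Λ hcard _))
    exact hj ▸ (Λ.orderEmbOfFin hcard).monotone (Fin.mk_le_mk.mpr (by omega))
  exists_eq_L i := by
    obtain ⟨j, hj⟩ : v i ∈ Set.range (Λ.orderEmbOfFin hcard) := by
      rw [range_orderEmbOfFin]; exact hv i
    refine ⟨j, Nat.lt_succ_iff.mp j.isLt, hj ▸ ?_⟩
    exact congrArg _ (Fin.ext (min_eq_left (Nat.lt_succ_iff.mp j.isLt)).symm)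
  exists_eq_L_top := by
    obtain ⟨i, hi⟩ := htop
    obtain ⟨j, hj⟩ : v i ∈ Set.range (Λ.orderEmbOfFin hcard) := by
      rw [range_orderEmbOfFin]; exact hv i
    refine ⟨i, le_antisymm ?_ (hi _ (orderEmbOfFin_mem Λ hcard _))⟩
    exact hj ▸ (Λ.orderEmbOfFin hcard).monotone (Fin.mk_le_mk.mpr (by omega))

lemma nonempty_of_forall_pos_mem_range {v : Fin n → ℝ} (c : Fin m → ℝ) (hv : ∀ i, 0 ≤ v i)
    (hpos : ∃ i, 0 < v i) (hc : ∀ i, 0 < v i → v i ∈ Set.range c) :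
    Nonempty (LevelGrid m v) := by
  classical
  obtain ⟨i₀, hi₀⟩ := hpos
  obtain ⟨imax, -, hmax⟩ := exists_max_image univ v ⟨i₀, mem_univ i₀⟩
  set Λ₀ : Finset ℝ := insert 0 (univ.image v)
  have hcard : #Λ₀ ≤ m + 1 := by
    have hsub : Λ₀ ⊆ insert 0 (univ.image c) := fun x hx => by
      rcases mem_insert.mp hx with rfl | hx
      · exact mem_insert_self 0 _
      obtain ⟨i, -, rfl⟩ := mem_image.mp hx
      rcases (hv i).eq_or_lt with h | h
      · exact h ▸ mem_insert_self 0 _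
      · obtain ⟨t, ht⟩ := hc i h
        exact ht ▸ mem_insert_of_mem (mem_image_of_mem c (mem_univ t))
    calc #Λ₀ ≤ #(insert 0 (univ.image c)) := card_le_card hsub
      _ ≤ #(univ.image c) + 1 := card_insert_le _ _
      _ ≤ m + 1 := by simpa using card_image_le (s := univ) (f := c)
  have hΛ₀ : ↑Λ₀ ⊆ Set.Icc 0 (v imax) := fun x hx => by
    rcases mem_insert.mp hx with rfl | hx
    · exact ⟨le_rfl, hv imax⟩
    obtain ⟨i, -, rfl⟩ := mem_image.mp hx
    exact ⟨hv i, hmax i (mem_univ i)⟩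
  obtain ⟨Λ, hsub, hΛ, hΛcard⟩ :=
    (Set.Icc_infinite (hi₀.trans_le (hmax i₀ (mem_univ i₀)))).exists_finset_superset_card_eq
      hΛ₀ hcard
  exact ⟨ofFinset hΛcard (hsub (mem_insert_self 0 _)) (fun x hx => (hΛ hx).1)
    (fun i => hsub (mem_insert_of_mem (mem_image_of_mem v (mem_univ i))))
    ⟨imax, fun x hx => (hΛ hx).2⟩⟩

end LevelGrid

/-- **Lemma (Majorization Maximality of Nested Sequences).** Given any request sequence
`E ∈ E_{n,m,q}`, there is a nested sequence `Ẽ ∈ E^nest_{n,m,q}` with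
`WF(E) ⪯ WF(Ẽ)` and `OPT(E) ⪰ OPT(Ẽ)`. -/
theorem nested_majorization_maximality (n m : ℕ) (q : ℝ)
    (E : ReqSeq n m) (hE : E ∈ seqs n m q) :
    ∃ Etil : ReqSeq n m, Etil ∈ seqs n m q ∧ IsNested Etil ∧
      Majorizes (wfLoad Etil) (wfLoad E) ∧
      Majorizes (optLoad E) (optLoad Etil) := by
  rcases Nat.eq_zero_or_pos m with rfl | hm
  · exact ⟨E, hE, fun s => s.elim0, Majorizes.refl _, Majorizes.refl _⟩
  obtain ⟨x, c, hx⟩ := exists_isWaterFilling E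
  have hv : ∑ t, x t ∈ loads E := ⟨x, hx.1, rfl⟩
  obtain ⟨G⟩ := LevelGrid.nonempty_of_forall_pos_mem_range c (nonneg_of_mem_loads hv)
    (exists_pos_of_mem_loads hv hm) fun i hi => hx.mem_range_level hi
  have hopt := (optLoad_isOpt E).1
  refine ⟨G.seq, G.sum_seq_q.trans ((sum_eq_of_mem_loads hv).trans hE), G.isNested_seq, ?_, ?_⟩
  · rw [G.wfLoad_seq, wfLoad_eq_of_isWaterFilling hx]
    exact Majorizes.refl _
  · refine (optLoad_isOpt G.seq).2 _ (G.mem_loads_seq (nonneg_of_mem_loads hopt) ?_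
      fun t => hx.sum_filter_sub_le hopt (G.nonneg_L t.isLt.le))
    rw [sum_eq_of_mem_loads hopt, sum_eq_of_mem_loads hv]
end

section
/- Let n = 2 offline nodes, m = 2 online nodes, total quantity q = 2, and define f(x) = 1 if x(1) > 1/2 and x(2) > 1/2, and f(x) = 0 otherwise. Then f is Schur-concave, and there exists a randomized allocation policy A such that for all α > 0: Reg^max_{(2,2,2),α,f}(A) ≤ max(α − 1/2, 0) < α ≤ Reg^max_{(2,2,2),α,f}(WF). In particular, water-filling is not minimax optimal among randomized policies for this Schur-concave objective. -/
open Finset MeasureTheory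

/-- A deterministic allocation policy: maps the history of past
`(neighborhood, quantity, allocation)` triples and the current `(neighborhood, quantity)`
to an allocation. -/
def DetPolicy (n : ℕ) : Type :=
  List (Finset (Fin n) × ℝ × (Fin n → ℝ)) → Finset (Fin n) × ℝ → (Fin n → ℝ)

/-- A valid deterministic policy always outputs a feasible allocation. -/
def ValidDetPolicy {n : ℕ} (A : DetPolicy n) : Prop :=
  ∀ h N qt, N.Nonempty → 0 < qt → A h (N, qt) ∈ allocSet n N qt

/-- The history produced by running policy `A` on sequence `E` for `t` steps. -/
def hist {n m : ℕ} (A : DetPolicy n) (E : ReqSeq n m) :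
    ℕ → List (Finset (Fin n) × ℝ × (Fin n → ℝ))
  | 0 => []
  | t + 1 =>
    if ht : t < m then
      hist A E t ++ [(E.N ⟨t, ht⟩, E.q ⟨t, ht⟩, A (hist A E t) (E.N ⟨t, ht⟩, E.q ⟨t, ht⟩))]
    else hist A E t

/-- The allocation chosen by policy `A` on arrival `t` of sequence `E`. -/
def detAlloc {n m : ℕ} (A : DetPolicy n) (E : ReqSeq n m) (t : Fin m) : Fin n → ℝ :=
  A (hist A E t.val) (E.N t, E.q t)

/-- `A(E)`: the final load vector of deterministic policy `A` on `E`. -/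
def detLoad {n m : ℕ} (A : DetPolicy n) (E : ReqSeq n m) : Fin n → ℝ :=
  ∑ t, detAlloc A E t

instance (n : ℕ) : MeasurableSpace (DetPolicy n) := ⊤

/-- A randomized allocation policy: a probability distribution over deterministic policies
(almost surely valid). -/
structure RandPolicy (n : ℕ) where
  μ : Measure (DetPolicy n)
  prob : IsProbabilityMeasure μ
  valid : ∀ᵐ p ∂μ, ValidDetPolicy p

/-- `𝔼[A(E)]`: coordinatewise expected load of randomized policy `A` on `E`. -/
noncomputable def expLoad {n m : ℕ} (A : RandPolicy n) (E : ReqSeq n m) : Fin n → ℝ :=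
  fun i => ∫ p, detLoad p E i ∂A.μ
/-- The optimal hindsight objective value `max_{ℓ ∈ Δ(E)} f(ℓ)`. -/
noncomputable def hindMax {n m : ℕ} (f : (Fin n → ℝ) → ℝ) (E : ReqSeq n m) : ℝ :=
  sSup (f '' loads E)

/-- The optimal hindsight objective value `min_{ℓ ∈ Δ(E)} g(ℓ)`. -/
noncomputable def hindMin {n m : ℕ} (g : (Fin n → ℝ) → ℝ) (E : ReqSeq n m) : ℝ :=
  sInf (g '' loads E)

/-- `Reg^max_{(n,m,q),α,f}(WF)`. -/
noncomputable def regMaxWF (n m : ℕ) (q α : ℝ) (f : (Fin n → ℝ) → ℝ) : ℝ :=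
  sSup ((fun E => α * hindMax f E - f (wfLoad E)) '' seqs n m q)

/-- `Reg^min_{(n,m,q),α,g}(WF)`. -/
noncomputable def regMinWF (n m : ℕ) (q α : ℝ) (g : (Fin n → ℝ) → ℝ) : ℝ :=
  sSup ((fun E => g (wfLoad E) - α * hindMin g E) '' seqs n m q)

/-- `Reg^max_{(n,m,q),α,f}(A)` for a deterministic policy `A`. -/
noncomputable def regMaxDet (n m : ℕ) (q α : ℝ) (f : (Fin n → ℝ) → ℝ) (A : DetPolicy n) : ℝ :=
  sSup ((fun E => α * hindMax f E - f (detLoad A E)) '' seqs n m q)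

/-- `Reg^min_{(n,m,q),α,g}(A)` for a deterministic policy `A`. -/
noncomputable def regMinDet (n m : ℕ) (q α : ℝ) (g : (Fin n → ℝ) → ℝ) (A : DetPolicy n) : ℝ :=
  sSup ((fun E => g (detLoad A E) - α * hindMin g E) '' seqs n m q)

/-- `Reg^max_{(n,m,q),α,f}(A)` for a randomized policy `A` (cost uses `𝔼[f(A(E))]`). -/
noncomputable def regMaxRand (n m : ℕ) (q α : ℝ) (f : (Fin n → ℝ) → ℝ) (A : RandPolicy n) : ℝ :=
  sSup ((fun E => α * hindMax f E - ∫ p, f (detLoad p E) ∂A.μ) '' seqs n m q)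

/-- `Reg^min_{(n,m,q),α,g}(A)` for a randomized policy `A` (cost uses `𝔼[g(A(E))]`). -/
noncomputable def regMinRand (n m : ℕ) (q α : ℝ) (g : (Fin n → ℝ) → ℝ) (A : RandPolicy n) : ℝ :=
  sSup ((fun E => (∫ p, g (detLoad p E) ∂A.μ) - α * hindMin g E) '' seqs n m q)

/-- The indicator objective `f(x) = 1{x(1) > 1/2 and x(2) > 1/2}`. -/
noncomputable def fInd : (Fin 2 → ℝ) → ℝ :=
  fun x => if 1 / 2 < x 0 ∧ 1 / 2 < x 1 then 1 else 0

/-!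
Water-filling splits a first request on both nodes evenly; if the second request can only go
to node 0, node 1 ends at exactly `1/2`, although the load `(1, 1)` was feasible. So WF has
regret `α` on that sequence.

The randomized policy flips a fair coin `β`; a first request on both nodes puts `min(q, 1)` on
node `β` (the rest on the other node), and a later request is water-filled, which maximizes the
minimum of the final load. When the total quantity is `2` and some feasible load exceeds `1/2`
on both nodes, then for the right `β` the first step can still be completed to such a load, so
the water-filled second step reaches one. Hence `𝔼[f] ≥ 1/2` whenever the hindsight optimum is
`1`, and the regret is at most `α - 1/2`.
-/

theorem fInd_nonneg (x : Fin 2 → ℝ) : 0 ≤ fInd x := by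
  unfold fInd; split_ifs <;> norm_num

theorem fInd_le_one (x : Fin 2 → ℝ) : fInd x ≤ 1 := by
  unfold fInd; split_ifs <;> norm_num

theorem fInd_eq_one {x : Fin 2 → ℝ} (hx : 1 / 2 < min (x 0) (x 1)) : fInd x = 1 :=
  if_pos (lt_min_iff.1 hx)

theorem fInd_eq_zero {x : Fin 2 → ℝ} (hx : min (x 0) (x 1) ≤ 1 / 2) : fInd x = 0 :=
  if_neg fun h => hx.not_gt (lt_min_iff.2 h)

theorem topSum_one {n : ℕ} (x : Fin n → ℝ) : topSum x 1 = ⨆ i, x i := by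
  have : (fun s : Finset (Fin n) => ∑ i ∈ s, x i) '' {s | s.card = 1} = Set.range x := by
    ext r
    simp only [Set.mem_image, Set.mem_ofPred_eq, card_eq_one, Set.mem_range]
    constructor
    · rintro ⟨s, ⟨i, rfl⟩, rfl⟩
      exact ⟨i, (sum_singleton x i).symm⟩
    · rintro ⟨i, rfl⟩
      exact ⟨{i}, ⟨i, rfl⟩, sum_singleton x i⟩
  rw [topSum, this, sSup_range]

theorem iSup_fin_two_eq_max (x : Fin 2 → ℝ) : ⨆ i, x i = max (x 0) (x 1) := by
  apply le_antisymm
  · exact ciSup_le fun i => by fin_cases i <;> simp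
  · exact max_le (le_ciSup (Set.finite_range x).bddAbove 0)
      (le_ciSup (Set.finite_range x).bddAbove 1)

theorem schurConcave_fInd : SchurConcave fInd := by
  intro x y _ _ ⟨hsum, htop⟩
  by_cases hy : 1 / 2 < min (y 0) (y 1)
  · have hmax : max (x 0) (x 1) ≤ max (y 0) (y 1) := by
      simpa only [topSum_one, iSup_fin_two_eq_max] using htop 1 (by norm_num)
    rw [Fin.sum_univ_two, Fin.sum_univ_two] at hsum
    rw [fInd_eq_one hy, fInd_eq_one]
    -- the smaller entry is the total minus the larger one
    rw [← min_add_max (y 0), ← min_add_max (x 0)] at hsum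
    linarith
  · rw [fInd_eq_zero (not_lt.1 hy)]
    exact fInd_nonneg x

theorem hindMax_le {n m : ℕ} {f : (Fin n → ℝ) → ℝ} {E : ReqSeq n m} {c : ℝ} (hc : 0 ≤ c)
    (hf : ∀ ℓ ∈ loads E, f ℓ ≤ c) : hindMax f E ≤ c :=
  Real.sSup_le (by rintro _ ⟨ℓ, hℓ, rfl⟩; exact hf ℓ hℓ) hc

theorem fInd_le_hindMax {m : ℕ} {E : ReqSeq 2 m} {ℓ : Fin 2 → ℝ} (hℓ : ℓ ∈ loads E) :
    fInd ℓ ≤ hindMax fInd E :=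
  le_csSup ⟨1, by rintro _ ⟨ℓ', -, rfl⟩; exact fInd_le_one ℓ'⟩ (Set.mem_image_of_mem _ hℓ)

theorem hindMax_fInd_le_one {m : ℕ} (E : ReqSeq 2 m) : hindMax fInd E ≤ 1 :=
  hindMax_le zero_le_one fun ℓ _ => fInd_le_one ℓ

theorem eq_pi_single_of_mem_allocSet {n : ℕ} {j : Fin n} {q : ℝ} {x : Fin n → ℝ}
    (hx : x ∈ allocSet n {j} q) : x = Pi.single j q := by
  obtain ⟨-, hout, hsum⟩ := hx
  have hothers : ∀ i ≠ j, x i = 0 := fun i hi => hout i (by simpa using hi)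
  funext i
  by_cases hij : i = j
  · subst hij
    rw [Pi.single_eq_same, ← hsum, sum_eq_single i (fun k _ hk => hothers k hk) (by simp)]
  · rw [Pi.single_eq_of_ne hij, hothers i hij]

theorem pi_single_mem_allocSet {n : ℕ} {N : Finset (Fin n)} {j : Fin n} (hj : j ∈ N) {q : ℝ}
    (hq : 0 ≤ q) : Pi.single j q ∈ allocSet n N q := by
  refine ⟨fun i => ?_, fun i hi => by simp [(ne_of_mem_of_not_mem hj hi).symm], by simp⟩
  by_cases hij : i = j
  · subst hij; simpa
  · simp [Pi.single_eq_of_ne hij]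

theorem fin_two_finset_cases {N : Finset (Fin 2)} (hN : N.Nonempty) :
    N = univ ∨ N = {0} ∨ N = {1} := by
  revert N; decide

theorem detLoad_of_two_arrivals {n : ℕ} (A : DetPolicy n) (E : ReqSeq n 2) :
    detLoad A E = A [] (E.N 0, E.q 0) + A [(E.N 0, E.q 0, A [] (E.N 0, E.q 0))] (E.N 1, E.q 1) := by
  simp [detLoad, detAlloc, Fin.sum_univ_two, hist]

def histLoad {n : ℕ} (h : List (Finset (Fin n) × ℝ × (Fin n → ℝ))) : Fin n → ℝ :=
  (h.map fun r => r.2.2).sum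

noncomputable def twoFill (ℓ : Fin 2 → ℝ) (q : ℝ) : Fin 2 → ℝ :=
  let a := max 0 (min q ((q + ℓ 1 - ℓ 0) / 2))
  ![a, q - a]

noncomputable def biasedSplit (β : Fin 2) (q : ℝ) : Fin 2 → ℝ :=
  fun i => if i = β then min q 1 else q - min q 1

noncomputable def biasedPolicy (β : Fin 2) : DetPolicy 2 := fun h Nq =>
  if Nq.1 = univ then
    if h.isEmpty then biasedSplit β Nq.2 else twoFill (histLoad h) Nq.2
  else Pi.single (if 0 ∈ Nq.1 then 0 else 1) Nq.2

theorem twoFill_mem_allocSet (ℓ : Fin 2 → ℝ) {q : ℝ} (hq : 0 ≤ q) :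
    twoFill ℓ q ∈ allocSet 2 univ q := by
  have h0 : 0 ≤ max 0 (min q ((q + ℓ 1 - ℓ 0) / 2)) := le_max_left _ _
  have hq' : max 0 (min q ((q + ℓ 1 - ℓ 0) / 2)) ≤ q := max_le hq (min_le_left _ _)
  refine ⟨fun i => ?_, fun i hi => absurd (mem_univ i) hi, ?_⟩
  · fin_cases i <;> simp [twoFill]; linarith
  · simp [twoFill]

theorem biasedSplit_mem_allocSet (β : Fin 2) {q : ℝ} (hq : 0 ≤ q) :
    biasedSplit β q ∈ allocSet 2 univ q := by
  have h0 : 0 ≤ min q 1 := le_min hq zero_le_one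
  have hq' : min q 1 ≤ q := min_le_left _ _
  refine ⟨fun i => ?_, fun i hi => absurd (mem_univ i) hi, ?_⟩
  · unfold biasedSplit; split_ifs <;> linarith
  · fin_cases β <;> simp [biasedSplit, Fin.sum_univ_two]

theorem biasedPolicy_of_ne_univ (β : Fin 2) (h : List (Finset (Fin 2) × ℝ × (Fin 2 → ℝ)))
    {N : Finset (Fin 2)} (hN : N.Nonempty) (hNu : N ≠ univ) (q : ℝ) :
    ∃ j, N = {j} ∧ biasedPolicy β h (N, q) = Pi.single j q := by
  rcases fin_two_finset_cases hN with rfl | rfl | rfl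
  · exact absurd rfl hNu
  · exact ⟨0, by simp [biasedPolicy]⟩
  · exact ⟨1, by simp [biasedPolicy]⟩

theorem validDetPolicy_biasedPolicy (β : Fin 2) : ValidDetPolicy (biasedPolicy β) := by
  intro h N q hN hq
  by_cases hNu : N = univ
  · subst hNu
    simp only [biasedPolicy, if_true]
    split_ifs
    · exact biasedSplit_mem_allocSet β hq.le
    · exact twoFill_mem_allocSet _ hq.le
  · obtain ⟨j, rfl, hx⟩ := biasedPolicy_of_ne_univ β h hN hNu q
    rw [hx]
    exact pi_single_mem_allocSet (mem_singleton_self j) hq.le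

theorem min_le_min_twoFill (ℓ : Fin 2 → ℝ) {N : Finset (Fin 2)} {q : ℝ} {y : Fin 2 → ℝ}
    (hy : y ∈ allocSet 2 N q) :
    min (ℓ 0 + y 0) (ℓ 1 + y 1) ≤ min (ℓ 0 + twoFill ℓ q 0) (ℓ 1 + twoFill ℓ q 1) := by
  obtain ⟨hnonneg, -, hsum⟩ := hy
  rw [Fin.sum_univ_two] at hsum
  have hy0 := hnonneg 0
  have hy1 := hnonneg 1
  set m := min (ℓ 0 + y 0) (ℓ 1 + y 1)
  have hm0 : m ≤ ℓ 0 + y 0 := min_le_left _ _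
  have hm1 : m ≤ ℓ 1 + y 1 := min_le_right _ _
  simp only [twoFill, Matrix.cons_val_zero, Matrix.cons_val_one]
  refine le_min ?_ ?_
  all_goals
    rcases le_total ((q + ℓ 1 - ℓ 0) / 2) 0 with h | h
    · rw [min_eq_right (by linarith), max_eq_left h]; linarith
    · rcases le_total q ((q + ℓ 1 - ℓ 0) / 2) with h' | h'
      · rw [min_eq_left h', max_eq_right (by linarith)]; linarith
      · rw [min_eq_right h', max_eq_right h]; linarith

theorem min_le_min_biasedPolicy (β : Fin 2) {h : List (Finset (Fin 2) × ℝ × (Fin 2 → ℝ))}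
    (hh : h ≠ []) {N : Finset (Fin 2)} (hN : N.Nonempty) {q : ℝ} {y : Fin 2 → ℝ}
    (hy : y ∈ allocSet 2 N q) :
    min ((histLoad h + y) 0) ((histLoad h + y) 1) ≤
      min ((histLoad h + biasedPolicy β h (N, q)) 0)
        ((histLoad h + biasedPolicy β h (N, q)) 1) := by
  by_cases hNu : N = univ
  · have : biasedPolicy β h (N, q) = twoFill (histLoad h) q := by
      simp [biasedPolicy, hNu, hh]
    rw [this]
    exact min_le_min_twoFill _ hy
  · obtain ⟨j, rfl, hx⟩ := biasedPolicy_of_ne_univ β h hN hNu q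
    rw [hx, ← eq_pi_single_of_mem_allocSet hy]

theorem exists_good_completion_biasedSplit {q₀ q₁ : ℝ} (hq : q₀ + q₁ = 2) (hq₁ : 0 < q₁)
    {N : Finset (Fin 2)} (hN : N.Nonempty) {u₀ u₁ : Fin 2 → ℝ}
    (hu₀ : u₀ ∈ allocSet 2 univ q₀) (hu₁ : u₁ ∈ allocSet 2 N q₁)
    (hgood : 1 / 2 < min ((u₀ + u₁) 0) ((u₀ + u₁) 1)) :
    ∃ β, ∃ y ∈ allocSet 2 N q₁,
      1 / 2 < min ((biasedSplit β q₀ + y) 0) ((biasedSplit β q₀ + y) 1) := by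
  obtain ⟨hu₀0, -, hsum₀⟩ := hu₀
  rw [Fin.sum_univ_two] at hsum₀
  have h0 := hu₀0 0
  have h1 := hu₀0 1
  have hmin : min q₀ 1 ≤ 1 := min_le_right _ _
  have hrest : q₀ - min q₀ 1 ≤ 1 := by
    rcases min_cases q₀ 1 with ⟨h, -⟩ | ⟨h, -⟩ <;> linarith
  rcases fin_two_finset_cases hN with rfl | rfl | rfl
  · -- top both nodes up to 1
    refine ⟨0, fun i => 1 - biasedSplit 0 q₀ i, ⟨fun i => ?_, by simp, ?_⟩, ?_⟩
    · simp only [biasedSplit]; split_ifs <;> linarith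
    · simp [biasedSplit, Fin.sum_univ_two]; linarith
    · norm_num
  · rw [eq_pi_single_of_mem_allocSet hu₁] at hgood
    refine ⟨1, _, pi_single_mem_allocSet (mem_singleton_self 0) hq₁.le, ?_⟩
    simp only [lt_min_iff, Pi.add_apply, Pi.single_eq_same, Pi.single_eq_of_ne one_ne_zero,
      add_zero] at hgood ⊢
    norm_num [biasedSplit]
    exact ⟨by linarith, by linarith⟩
  · rw [eq_pi_single_of_mem_allocSet hu₁] at hgood
    refine ⟨0, _, pi_single_mem_allocSet (mem_singleton_self 1) hq₁.le, ?_⟩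
    simp only [lt_min_iff, Pi.add_apply, Pi.single_eq_same, Pi.single_eq_of_ne zero_ne_one,
      add_zero] at hgood ⊢
    norm_num [biasedSplit]
    exact ⟨by linarith, by linarith⟩

theorem exists_good_completion {E : ReqSeq 2 2} (hE : E ∈ seqs 2 2 2) {u : Fin 2 → Fin 2 → ℝ}
    (hu : Feasible E u) (hgood : 1 / 2 < min ((u 0 + u 1) 0) ((u 0 + u 1) 1)) :
    ∃ β, ∃ y ∈ allocSet 2 (E.N 1) (E.q 1),
      1 / 2 < min ((biasedPolicy β [] (E.N 0, E.q 0) + y) 0)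
        ((biasedPolicy β [] (E.N 0, E.q 0) + y) 1) := by
  by_cases hN₀ : E.N 0 = univ
  · have hsplit : ∀ β, biasedPolicy β [] (E.N 0, E.q 0) = biasedSplit β (E.q 0) := by
      simp [biasedPolicy, hN₀]
    simp_rw [hsplit]
    have hq : E.q 0 + E.q 1 = 2 := by simpa [seqs, Fin.sum_univ_two] using hE
    exact exists_good_completion_biasedSplit hq (E.q_pos 1) (E.N_nonempty 1) (hN₀ ▸ hu 0) (hu 1)
      hgood
  · obtain ⟨j, hj, hx⟩ := biasedPolicy_of_ne_univ 0 [] (E.N_nonempty 0) hN₀ (E.q 0)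
    refine ⟨0, u 1, hu 1, ?_⟩
    rwa [hx, ← eq_pi_single_of_mem_allocSet (hj ▸ hu 0)]

theorem exists_biasedPolicy_fInd_eq_one {E : ReqSeq 2 2} (hE : E ∈ seqs 2 2 2)
    {ℓ : Fin 2 → ℝ} (hℓ : ℓ ∈ loads E) (hgood : 1 / 2 < min (ℓ 0) (ℓ 1)) :
    ∃ β, fInd (detLoad (biasedPolicy β) E) = 1 := by
  obtain ⟨u, hu, rfl⟩ := hℓ
  rw [Fin.sum_univ_two] at hgood
  obtain ⟨β, y, hy, hgood'⟩ := exists_good_completion hE hu hgood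
  set a := biasedPolicy β [] (E.N 0, E.q 0)
  have hstep := min_le_min_biasedPolicy β (List.cons_ne_nil (E.N 0, E.q 0, a) [])
    (E.N_nonempty 1) hy
  have hload : histLoad [(E.N 0, E.q 0, a)] = a := by simp [histLoad]
  rw [hload] at hstep
  exact ⟨β, fInd_eq_one (detLoad_of_two_arrivals (biasedPolicy β) E ▸ hgood'.trans_le hstep)⟩

open scoped ENNReal

noncomputable def randBiased : RandPolicy 2 where
  μ := Measure.sum fun β : Fin 2 => (2⁻¹ : ℝ≥0∞) • Measure.dirac (biasedPolicy β)
  prob := ⟨by simp [ENNReal.inv_two_add_inv_two]⟩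
  valid := Measure.ae_sum_iff.2 fun β =>
    Measure.ae_smul_measure
      ((ae_dirac_iff MeasurableSpace.measurableSet_top).2 (validDetPolicy_biasedPolicy β)) _

theorem integral_randBiased (g : DetPolicy 2 → ℝ) :
    ∫ p, g p ∂randBiased.μ = ∑ β, g (biasedPolicy β) / 2 := by
  rw [randBiased, integral_sum_dirac (by simp), tsum_fintype]
  simp [div_eq_inv_mul]

theorem half_le_integral_fInd_randBiased {E : ReqSeq 2 2} (hE : E ∈ seqs 2 2 2)
    {ℓ : Fin 2 → ℝ} (hℓ : ℓ ∈ loads E) (hgood : 1 / 2 < min (ℓ 0) (ℓ 1)) :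
    1 / 2 ≤ ∫ p, fInd (detLoad p E) ∂randBiased.μ := by
  obtain ⟨β, hβ⟩ := exists_biasedPolicy_fInd_eq_one hE hℓ hgood
  rw [integral_randBiased]
  calc 1 / 2 = fInd (detLoad (biasedPolicy β) E) / 2 := by rw [hβ]
    _ ≤ _ := single_le_sum (f := fun β => fInd (detLoad (biasedPolicy β) E) / 2)
        (fun β _ => div_nonneg (fInd_nonneg _) zero_le_two) (mem_univ β)

theorem regMaxRand_randBiased_le {α : ℝ} (hα : 0 ≤ α) :
    regMaxRand 2 2 2 α fInd randBiased ≤ max (α - 1 / 2) 0 := by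
  refine Real.sSup_le ?_ (le_max_right _ _)
  rintro _ ⟨E, hE, rfl⟩
  by_cases hgood : ∃ ℓ ∈ loads E, 1 / 2 < min (ℓ 0) (ℓ 1)
  · obtain ⟨ℓ, hℓ, hgood⟩ := hgood
    have hmax := hindMax_fInd_le_one E
    have := half_le_integral_fInd_randBiased hE hℓ hgood
    exact le_max_of_le_left (by nlinarith)
  · push Not at hgood
    have hmax : hindMax fInd E ≤ 0 :=
      hindMax_le le_rfl fun ℓ hℓ => (fInd_eq_zero (hgood ℓ hℓ)).le
    have : 0 ≤ ∫ p, fInd (detLoad p E) ∂randBiased.μ :=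
      integral_nonneg fun p => fInd_nonneg (detLoad p E)
    exact le_max_of_le_right (by nlinarith)

noncomputable def wfTrap : ReqSeq 2 2 where
  N := ![univ, {0}]
  q := ![1, 1]
  N_nonempty := by decide
  q_pos t := by fin_cases t <;> norm_num

theorem wfTrap_mem_seqs : wfTrap ∈ seqs 2 2 2 := by
  norm_num [seqs, wfTrap, Fin.sum_univ_two]

theorem hindMax_wfTrap : hindMax fInd wfTrap = 1 := by
  refine le_antisymm (hindMax_fInd_le_one wfTrap) ?_
  have hx : Feasible wfTrap ![Pi.single 1 1, Pi.single 0 1] := by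
    intro t
    fin_cases t
    · exact pi_single_mem_allocSet (mem_univ 1) zero_le_one
    · exact pi_single_mem_allocSet (mem_singleton_self 0) zero_le_one
  have hload : (fun _ => 1 : Fin 2 → ℝ) ∈ loads wfTrap := by
    refine ⟨_, hx, funext fun i => ?_⟩
    fin_cases i <;> simp [Fin.sum_univ_two]
  calc (1 : ℝ) = fInd fun _ => 1 := (fInd_eq_one (by norm_num)).symm
    _ ≤ hindMax fInd wfTrap := fInd_le_hindMax hload

theorem fInd_wfLoad_wfTrap : fInd (wfLoad wfTrap) = 0 := by
  unfold wfLoad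
  split_ifs with h
  · obtain ⟨hfeas, hopt⟩ := h.choose_spec
    set x := h.choose
    have hhalf : (fun _ => 1 / 2 : Fin 2 → ℝ) ∈ allocSet 2 (wfTrap.N 0) (wfTrap.q 0) :=
      ⟨fun _ => by norm_num, fun i hi => absurd (mem_univ i) hi, by norm_num [wfTrap]⟩
    -- water-filling the first arrival must split it evenly
    have hsplit := hopt 0 _ hhalf
    simp [reqMinOn, wfTrap, prevLoad] at hsplit
    have hsum : x 0 0 + x 0 1 = 1 := by simpa [wfTrap, Fin.sum_univ_two] using (hfeas 0).2.2
    have hx₁ : x 1 1 = 0 := (hfeas 1).2.1 1 (by simp [wfTrap])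
    refine fInd_eq_zero (min_le_of_right_le ?_)
    rw [Fin.sum_univ_two, Pi.add_apply, hx₁]
    linarith
  · exact fInd_eq_zero (by norm_num)

theorem le_regMaxWF {α : ℝ} (hα : 0 ≤ α) : α ≤ regMaxWF 2 2 2 α fInd := by
  have hbdd : BddAbove ((fun E => α * hindMax fInd E - fInd (wfLoad E)) '' seqs 2 2 2) := by
    refine ⟨α, ?_⟩
    rintro _ ⟨E, -, rfl⟩
    have := mul_le_of_le_one_right hα (hindMax_fInd_le_one E)
    linarith [fInd_nonneg (wfLoad E)]
  have := le_csSup hbdd (Set.mem_image_of_mem _ wfTrap_mem_seqs)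
  rwa [hindMax_wfTrap, fInd_wfLoad_wfTrap, mul_one, sub_zero] at this

/-- **Theorem (Deterministic and Randomized Separation).** With `n = m = 2`, `q = 2`, and
the Schur-concave objective `f(x) = 1{x(1) > 1/2 ∧ x(2) > 1/2}`, there is a randomized
policy `A` with `Reg^max_{(2,2,2),α,f}(A) ≤ (α − 1/2)⁺ < α ≤ Reg^max_{(2,2,2),α,f}(WF)`
for all `α > 0`. -/
theorem det_rand_separation :
    SchurConcave fInd ∧
    ∃ A : RandPolicy 2, ∀ α : ℝ, 0 < α →
      regMaxRand 2 2 2 α fInd A ≤ max (α - 1 / 2) 0 ∧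
      max (α - 1 / 2) 0 < α ∧
      α ≤ regMaxWF 2 2 2 α fInd :=
  ⟨schurConcave_fInd, randBiased, fun _ hα =>
    ⟨regMaxRand_randBiased_le hα.le, max_lt (by linarith) hα, le_regMaxWF hα.le⟩⟩
end

section
/- Fix a request sequence E = ((N_t, q_t))_{t∈[m]} with n offline nodes. Let σ : [m] → [m] be any permutation such that for every offline node i and every pair t, s ∈ Γ_i(E) with t < s, we have σ(t) < σ(s) (σ preserves the relative order of each offline node's neighborhood). Define the reordered sequence Ê = ((N̂_t, q̂_t))_{t∈[m]} with N̂_t = N_{σ^{-1}(t)} and q̂_t = q_{σ^{-1}(t)}. Then the water-filling allocations (x_t) on E and (x̂_t) on Ê satisfy x_t = x̂_{σ(t)} for all t ∈ [m], and WF(E) = WF(Ê). -/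
open Finset MeasureTheory

/-! At each arrival, water-filling is the unique maximizer of the minimum load over the arrival's
neighborhood: any maximizer must be the profile `fillTo` that raises the neighbors to a common
level, since otherwise spreading the leftover mass evenly would raise that minimum. This
maximizer depends only on the current loads of the neighbors, and those loads come only from
earlier arrivals sharing the node, which `σ` keeps earlier. Induction along the order of `Ê`
therefore shows that both runs make the same allocations. -/

noncomputable def fillTo {n : ℕ} (N : Finset (Fin n)) (ℓ : Fin n → ℝ) (v : ℝ) : Fin n → ℝ :=
  fun i => if i ∈ N then max (v - ℓ i) 0 else 0

lemma fillTo_nonneg {n : ℕ} (N : Finset (Fin n)) (ℓ : Fin n → ℝ) (v : ℝ) (i : Fin n) :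
    0 ≤ fillTo N ℓ v i := by
  unfold fillTo
  split_ifs
  exacts [le_max_right _ _, le_rfl]

lemma fillTo_le {n : ℕ} {N : Finset (Fin n)} (hN : N.Nonempty) {q : ℝ} {ℓ x : Fin n → ℝ}
    (hx : x ∈ allocSet n N q) : fillTo N ℓ (N.inf' hN (x + ℓ)) ≤ x := by
  intro i
  by_cases hi : i ∈ N
  · have hle : N.inf' hN (x + ℓ) ≤ x i + ℓ i := Finset.inf'_le (x + ℓ) hi
    simp only [fillTo, if_pos hi, max_le_iff]
    exact ⟨by linarith, hx.1 i⟩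
  · simp only [fillTo, if_neg hi, hx.2.1 i hi, le_refl]

lemma eq_fillTo_of_isMaxOn {n : ℕ} {N : Finset (Fin n)} (hN : N.Nonempty) {q : ℝ}
    {ℓ x : Fin n → ℝ} (hx : x ∈ allocSet n N q)
    (hmax : IsMaxOn (fun z => N.inf' hN (z + ℓ)) (allocSet n N q) x) :
    x = fillTo N ℓ (N.inf' hN (x + ℓ)) := by
  set v := N.inf' hN (x + ℓ)
  set w := fillTo N ℓ v
  have hwx : w ≤ x := fillTo_le hN hx
  -- Otherwise spreading the missing mass evenly over `N` would lift the minimum above `v`.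
  have hq : q ≤ ∑ i, w i := by
    by_contra! hlt
    set δ := (q - ∑ i, w i) / N.card
    have hδ : 0 < δ := div_pos (by linarith) (by exact_mod_cast hN.card_pos)
    set z : Fin n → ℝ := fun i => w i + if i ∈ N then δ else 0
    have hz : z ∈ allocSet n N q := by
      refine ⟨fun i => ?_, fun i hi => ?_, ?_⟩
      · have := fillTo_nonneg N ℓ v i
        positivity
      · simp [z, w, fillTo, hi]
      · rw [Finset.sum_add_distrib, Finset.sum_ite_mem, Finset.univ_inter, Finset.sum_const,
          nsmul_eq_mul, mul_div_cancel₀ _ (by exact_mod_cast hN.card_pos.ne')]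
        ring
    have hlift : v < N.inf' hN (z + ℓ) := by
      rw [Finset.lt_inf'_iff]
      intro i hi
      simp only [Pi.add_apply, z, w, fillTo, if_pos hi]
      linarith [le_max_left (v - ℓ i) 0]
    exact (isMaxOn_iff.mp hmax z hz).not_gt hlift
  have hzero : ∑ i, (x i - w i) = 0 := by
    rw [Finset.sum_sub_distrib, hx.2.2]
    linarith [Finset.sum_le_sum fun i (_ : i ∈ Finset.univ) => hwx i, hx.2.2]
  funext i
  have := (Finset.sum_eq_zero_iff_of_nonneg fun i _ => sub_nonneg.2 (hwx i)).1 hzero i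
    (Finset.mem_univ i)
  linarith

lemma eq_of_isMaxOn_inf' {n : ℕ} {N : Finset (Fin n)} (hN : N.Nonempty) {q : ℝ}
    {ℓ ℓ' x y : Fin n → ℝ} (hℓ : ∀ i ∈ N, ℓ i = ℓ' i) (hx : x ∈ allocSet n N q)
    (hy : y ∈ allocSet n N q)
    (hxmax : IsMaxOn (fun z => N.inf' hN (z + ℓ)) (allocSet n N q) x)
    (hymax : IsMaxOn (fun z => N.inf' hN (z + ℓ')) (allocSet n N q) y) : x = y := by
  have hobj : (fun z => N.inf' hN (z + ℓ')) = fun z => N.inf' hN (z + ℓ) :=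
    funext fun z => Finset.inf'_congr hN rfl fun i hi => by simp only [Pi.add_apply, hℓ i hi]
  rw [hobj] at hymax
  have hlevel : N.inf' hN (x + ℓ) = N.inf' hN (y + ℓ) :=
    le_antisymm (isMaxOn_iff.mp hymax x hx) (isMaxOn_iff.mp hxmax y hy)
  rw [eq_fillTo_of_isMaxOn hN hx hxmax, eq_fillTo_of_isMaxOn hN hy hymax, hlevel]

lemma IsWFAlloc.isMaxOn {n m : ℕ} {E : ReqSeq n m} {x : Fin m → Fin n → ℝ} (hx : IsWFAlloc E x)
    {t : Fin m} {N : Finset (Fin n)} (hNt : E.N t = N) {q : ℝ} (hqt : E.q t = q)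
    (hN : N.Nonempty) :
    IsMaxOn (fun z => N.inf' hN (z + prevLoad x t)) (allocSet n N q) (x t) := by
  subst hNt hqt
  exact isMaxOn_iff.mpr (hx.2 t)

-- Arrivals not adjacent to `i` put no load on it, and `σ` keeps the order of those adjacent to it.
lemma prevLoad_eq_sum_of_strictMonoOn {n m : ℕ} {E : ReqSeq n m} {x : Fin m → Fin n → ℝ}
    (hx : Feasible E x) {σ : Fin m → Fin m} {i : Fin n} (hσ : StrictMonoOn σ {s | i ∈ E.N s})
    {t : Fin m} (hi : i ∈ E.N t) :
    prevLoad x t i = ∑ s with σ s < σ t, x s i := by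
  simp only [prevLoad, Finset.sum_filter]
  refine Finset.sum_congr rfl fun s _ => ?_
  by_cases hs : i ∈ E.N s
  · simp only [hσ.lt_iff_lt hs hi]
  · simp only [(hx s).2.1 i hs, ite_self]

lemma prevLoad_perm_apply {n m : ℕ} (x : Fin m → Fin n → ℝ) (σ : Equiv.Perm (Fin m))
    (t : Fin m) (i : Fin n) :
    prevLoad x (σ t) i = ∑ s with σ s < σ t, x (σ s) i :=
  (Finset.sum_equiv σ (by simp) fun _ _ => rfl).symm

/-- **Proposition (Water-filling preserving permutations).** If the permutation `σ`
preserves the relative order of each offline node's neighborhood, then water-filling on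
the reordered sequence `Ê` (with `N̂_t = N_{σ⁻¹(t)}`, `q̂_t = q_{σ⁻¹(t)}`) produces the
same per-node allocations up to reindexing, and `WF(E) = WF(Ê)`. -/
theorem wf_invariant_under_permutation (n m : ℕ) (E Ehat : ReqSeq n m)
    (σ : Equiv.Perm (Fin m))
    (hσ : ∀ (i : Fin n) (t s : Fin m), i ∈ E.N t → i ∈ E.N s → t < s → σ t < σ s)
    (hN : ∀ t, Ehat.N t = E.N (σ.symm t)) (hq : ∀ t, Ehat.q t = E.q (σ.symm t))
    (x xhat : Fin m → Fin n → ℝ)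
    (hx : IsWFAlloc E x) (hxhat : IsWFAlloc Ehat xhat) :
    (∀ t, x t = xhat (σ t)) ∧ (∑ t, x t = ∑ t, xhat t) := by
  have hagree : ∀ u, x (σ.symm u) = xhat u := by
    intro u
    induction u using WellFoundedLT.induction with
    | _ u ih =>
      set t := σ.symm u
      have hload : ∀ i ∈ E.N t, prevLoad x t i = prevLoad xhat u i := by
        intro i hi
        rw [prevLoad_eq_sum_of_strictMonoOn hx.1 (fun a ha b hb hab => hσ i a b ha hb hab) hi,
          ← σ.apply_symm_apply u, prevLoad_perm_apply]
        refine Finset.sum_congr rfl fun s hs => ?_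
        have hsu : σ s < u := by simpa [t] using (Finset.mem_filter.mp hs).2
        rw [← ih (σ s) hsu, σ.symm_apply_apply]
      have hxhat_mem : xhat u ∈ allocSet n (E.N t) (E.q t) := hN u ▸ hq u ▸ hxhat.1 u
      exact eq_of_isMaxOn_inf' (E.N_nonempty t) hload (hx.1 t) hxhat_mem
        (hx.isMaxOn rfl rfl _) (hxhat.isMaxOn (hN u) (hq u) _)
  have hmain : ∀ t, x t = xhat (σ t) := fun t => by simpa using hagree (σ t)
  exact ⟨hmain, by simp_rw [hmain]; exact Equiv.sum_comp σ xhat⟩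
end
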